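/- For the uniform pmf θ = (1/M)·1_M with M ≥ 3, the missing-mass CCRB for unbiased estimators equals B(θ) = (1/N)·((M-1)/M)^{2N}·(M-1)^3/(M^4 - 2M^3). -/

import Mathlib

/-!
For the uniform pmf every diagonal entry of `D(θ)` equals `c = M³(M-2)/(M-1)²`, so `D = c • 1`.
Since `UᵀU = 1`, the bound matrix collapses to `U (c • 1)⁻¹ Uᵀ = c⁻¹ • UUᵀ`, whose diagonal
sums to `tr(UᵀU) = M - 1`; every weight `(1 - θ_m)^{2N}` equals `((M-1)/M)^{2N}`.
-/

open Finset Matrix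

section OrthonormalCompression

variable {K : Type*} [Field K] {m n : Type*} [Fintype m] [Fintype n] [DecidableEq n]

theorem inv_smul_one {c : K} (hc : c ≠ 0) : (c • (1 : Matrix n n K))⁻¹ = c⁻¹ • 1 :=
  inv_eq_left_inv (by rw [smul_mul_smul_comm, inv_mul_cancel₀ hc, one_smul, one_mul])

theorem mul_inv_transpose_mul_smul_one_mul_mul_transpose [DecidableEq m] {U : Matrix m n K}
    (hU : Uᵀ * U = 1) {c : K} (hc : c ≠ 0) :
    U * (Uᵀ * (c • (1 : Matrix m m K)) * U)⁻¹ * Uᵀ = c⁻¹ • (U * Uᵀ) := by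
  rw [Matrix.mul_smul, Matrix.mul_one, Matrix.smul_mul, hU, inv_smul_one hc, Matrix.mul_smul,
    Matrix.mul_one, Matrix.smul_mul]

theorem trace_mul_transpose_of_transpose_mul_eq_one {U : Matrix m n K} (hU : Uᵀ * U = 1) :
    (U * Uᵀ).trace = Fintype.card n := by
  rw [trace_mul_comm, hU, trace_one]

end OrthonormalCompression

theorem uniform_fisher_diag_eq {M : ℕ} (hM : 2 ≤ M) (m : Fin M) :
    ∑ _l ∈ univ.erase m, 1 / ((1 / M : ℝ) * (1 - 1 / M)) - 1 / (1 - 1 / M : ℝ) ^ 2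
      = (M : ℝ) ^ 3 * (M - 2) / (M - 1) ^ 2 := by
  have hM' : (2 : ℝ) ≤ M := by exact_mod_cast hM
  have hM0 : (M : ℝ) ≠ 0 := by positivity
  have hM1 : (M : ℝ) - 1 ≠ 0 := by linarith
  rw [sum_const, card_erase_of_mem (mem_univ m), card_univ, Fintype.card_fin, nsmul_eq_mul,
    Nat.cast_sub (by omega : 1 ≤ M), Nat.cast_one]
  field_simp
  ring

theorem mmCCRB_uniform_general (M N : ℕ) (hM : 3 ≤ M)
    (θ : Fin M → ℝ) (hθ : ∀ i, θ i = 1 / M)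
    (U : Matrix (Fin M) (Fin (M - 1)) ℝ)
    (hUU : U.transpose * U = 1)
    (D : Matrix (Fin M) (Fin M) ℝ)
    (hD : D = Matrix.diagonal fun m =>
      (∑ l ∈ Finset.univ.erase m, 1 / (θ l * (1 - θ m))) - 1 / (1 - θ m) ^ 2) :
    (1 / N : ℝ) * ∑ m, (1 - θ m) ^ (2 * N) *
        (U * (U.transpose * D * U)⁻¹ * U.transpose) m m
      = (1 / N : ℝ) * (((M : ℝ) - 1) / M) ^ (2 * N) * ((M : ℝ) - 1) ^ 3
          / ((M : ℝ) ^ 4 - 2 * (M : ℝ) ^ 3) := by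
  obtain rfl : θ = fun _ => 1 / (M : ℝ) := funext hθ
  have hM' : (3 : ℝ) ≤ M := by exact_mod_cast hM
  have hM0 : (M : ℝ) ≠ 0 := by positivity
  set c : ℝ := (M : ℝ) ^ 3 * (M - 2) / (M - 1) ^ 2
  have hc : c ≠ 0 :=
    div_ne_zero (mul_ne_zero (pow_ne_zero 3 hM0) (by linarith)) (pow_ne_zero 2 (by linarith))
  have hDc : D = c • 1 := by
    rw [hD, smul_one_eq_diagonal]
    exact congrArg diagonal (funext (uniform_fisher_diag_eq (by omega)))
  have htrace : ∑ m, (U * Uᵀ) m m = (M : ℝ) - 1 := by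
    rw [show ∑ m, (U * Uᵀ) m m = (U * Uᵀ).trace from rfl,
      trace_mul_transpose_of_transpose_mul_eq_one hUU, Fintype.card_fin,
      Nat.cast_sub (by omega : 1 ≤ M), Nat.cast_one]
  rw [hDc, mul_inv_transpose_mul_smul_one_mul_mul_transpose hUU hc]
  simp only [Matrix.smul_apply, smul_eq_mul]
  rw [← mul_sum, ← mul_sum, htrace]
  have hcM : c⁻¹ * (M - 1) = (M - 1) ^ 3 / (M ^ 4 - 2 * M ^ 3) := by
    rw [inv_div, show (M : ℝ) ^ 4 - 2 * M ^ 3 = M ^ 3 * (M - 2) by ring]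
    ring
  rw [one_sub_div hM0, hcM]
  ring

/-- For the uniform pmf θ = (1/M)·1 with M ≥ 3, the unbiased missing-mass CCRB
(1/N) ∑_m (1-θ_m)^{2N} [U (Uᵀ D(θ) U)⁻¹ Uᵀ]_{mm} equals
(1/N)((M-1)/M)^{2N}(M-1)³/(M⁴-2M³). -/
theorem mmCCRB_uniform (M N : ℕ) (hM : 3 ≤ M) (hN : 0 < N)
    (θ : Fin M → ℝ) (hθ : ∀ i, θ i = 1 / M)
    (U : Matrix (Fin M) (Fin (M - 1)) ℝ)
    (hU1 : Matrix.vecMul (fun _ => (1 : ℝ)) U = 0)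
    (hUU : U.transpose * U = 1)
    (D : Matrix (Fin M) (Fin M) ℝ)
    (hD : D = Matrix.diagonal fun m =>
      (∑ l ∈ Finset.univ.erase m, 1 / (θ l * (1 - θ m))) - 1 / (1 - θ m) ^ 2) :
    (1 / N : ℝ) * ∑ m, (1 - θ m) ^ (2 * N) *
        (U * (U.transpose * D * U)⁻¹ * U.transpose) m m
      = (1 / N : ℝ) * (((M : ℝ) - 1) / M) ^ (2 * N) * ((M : ℝ) - 1) ^ 3
          / ((M : ℝ) ^ 4 - 2 * (M : ℝ) ^ 3) :=
  mmCCRB_uniform_general M N hM θ hθ U hUU D hD
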